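/- arXiv:1611.09407 — 2 statements merged into one kernel-verified Lean document; each statement's English description precedes it below -/
import Mathlib

section
/- Let D_j, D_{j₁}, D_{j₂} be three pairwise super-commuting odd square-zero derivations on a graded algebra A, each sending generators ξ_u of weight α to generators η_u^{(j)}, η_u^{(j₁)}, η_u^{(j₂)} of weights β_j, β_{j₁}, β_{j₂} respectively (and annihilating all η's). Suppose D_j, D_{j₁}, D_{j₂} restrict to isomorphisms on the relevant weight components so that D_j⁻¹∘D_{j₂}, D_{j₁}⁻¹∘D_{j₂}, D_j⁻¹∘D_{j₁} are defined on a weight component A_δ with δ = α + β_j + θ. Then for every f ∈ A_δ ∩ Ker D_j one has (D_j⁻¹ ∘ D_{j₂})(f) = −(D_{j₁}⁻¹ ∘ D_{j₂}) ∘ (D_j⁻¹ ∘ D_{j₁})(f) (the cocycle-like condition). -/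
/-- The cocycle-like condition. Let `D_j, D_{j₁}, D_{j₂}` be pairwise
super-commuting odd square-zero operators on `A`. Let `Ma` and `Mc` be the
weight components of weights `α + β_{j₂} + θ` and `α + β_{j₁} + θ`, on which
the relevant restrictions of `D_j` and `D_{j₁}` are injective (so that the
composites `D_j⁻¹∘D_{j₂}`, `D_{j₁}⁻¹∘D_{j₂}`, `D_j⁻¹∘D_{j₁}` are defined).
Let `f` be in the kernel of `D_j`, with primitive `F` (i.e. `D_j F = f`) whose
images `D_{j₂} F`, `D_{j₁} F` lie in the appropriate weight components. If
`x = D_j⁻¹(D_{j₂} f)`, `u = D_j⁻¹(D_{j₁} f)` and `z = D_{j₁}⁻¹(D_{j₂} u)`,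
then `x = −z`, i.e.
`(D_j⁻¹ ∘ D_{j₂})(f) = −(D_{j₁}⁻¹ ∘ D_{j₂}) ∘ (D_j⁻¹ ∘ D_{j₁})(f)`. -/
theorem cocycle_like_condition (K : Type*) [Field K]
    (A : Type*) [AddCommGroup A] [Module K A]
    (Dj Dj1 Dj2 : A →ₗ[K] A)
    (hj : Dj ∘ₗ Dj = 0) (hj1 : Dj1 ∘ₗ Dj1 = 0) (hj2 : Dj2 ∘ₗ Dj2 = 0)
    (hcjj1 : Dj ∘ₗ Dj1 + Dj1 ∘ₗ Dj = 0)
    (hcjj2 : Dj ∘ₗ Dj2 + Dj2 ∘ₗ Dj = 0)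
    (hcj1j2 : Dj1 ∘ₗ Dj2 + Dj2 ∘ₗ Dj1 = 0)
    (Ma Mc : Submodule K A)
    (hinjJa : ∀ w ∈ Ma, Dj w = 0 → w = 0)
    (hinjJc : ∀ w ∈ Mc, Dj w = 0 → w = 0)
    (hinjJ1a : ∀ w ∈ Ma, Dj1 w = 0 → w = 0)
    (f : A) (hfker : Dj f = 0)
    (F : A) (hF : Dj F = f) (hF2 : Dj2 F ∈ Ma) (hF1 : Dj1 F ∈ Mc)
    (x : A) (hxM : x ∈ Ma) (hx : Dj x = Dj2 f)
    (u : A) (huM : u ∈ Mc) (hu : Dj u = Dj1 f)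
    (z : A) (hzM : z ∈ Ma) (hz : Dj1 z = Dj2 u) :
    x = -z := by
  have anti : ∀ (P Q : A →ₗ[K] A), P ∘ₗ Q + Q ∘ₗ P = 0 → ∀ a, P (Q a) = - Q (P a) := by
    intro P Q h a
    have h' := congrArg (fun L => L a) h
    simp only [LinearMap.add_apply, LinearMap.comp_apply, LinearMap.zero_apply] at h'
    exact eq_neg_of_add_eq_zero_left h'
  -- x = - Dj2 F
  have hx' : x = - Dj2 F := by
    have h1 : Dj (x + Dj2 F) = 0 := by
      rw [map_add, hx, anti Dj Dj2 hcjj2, hF]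
      abel
    have := hinjJa (x + Dj2 F) (Ma.add_mem hxM hF2) h1
    exact eq_neg_of_add_eq_zero_left this
  -- u = - Dj1 F
  have hu' : u = - Dj1 F := by
    have h1 : Dj (u + Dj1 F) = 0 := by
      rw [map_add, hu, anti Dj Dj1 hcjj1, hF]
      abel
    have := hinjJc (u + Dj1 F) (Mc.add_mem huM hF1) h1
    exact eq_neg_of_add_eq_zero_left this
  -- z = Dj2 F
  have hz' : z = Dj2 F := by
    have h1 : Dj1 (z - Dj2 F) = 0 := by
      rw [map_sub, hz, hu', map_neg, anti Dj1 Dj2 hcj1j2]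
      abel
    have := hinjJ1a (z - Dj2 F) (Ma.sub_mem hzM hF2) h1
    exact sub_eq_zero.mp this
  rw [hx', hz']
end

section
/- In the setting of three commuting odd square-zero derivations D_j, D_{j₁}, D_{j₂} as above, the cocycle-like identity fails without the kernel hypothesis: there exists f ∈ A_{α+β_j} (namely f = ξ₁ · D_j(ξ₂) with two weight-α generators ξ₁, ξ₂) with D_j(f) ≠ 0 and (D_j⁻¹ ∘ D_{j₂})(f) ≠ ±(D_{j₁}⁻¹ ∘ D_{j₂}) ∘ (D_j⁻¹ ∘ D_{j₁})(f). -/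
/-- The cocycle-like identity fails without the kernel hypothesis. In the free
graded-commutative model algebra on two generators `ξ₁, ξ₂` of weight `α`
(even, fixed parity) and generators `η_u^{(k)} = D_k(ξ_u)` of weights `β_k`
(for three pairwise super-commuting odd square-zero derivations `D_j, D_{j₁},
D_{j₂}` annihilating the `η`'s), the element `f = ξ₁ · D_j(ξ₂)` satisfies
`D_j f ≠ 0`, and whenever `x = D_j⁻¹(D_{j₂} f)`, `u = D_j⁻¹(D_{j₁} f)`,
`z = D_{j₁}⁻¹(D_{j₂} u)` (the inverses being taken on the spans of the
products `ξ_u · η_v^{(k)}` of the appropriate weights), one has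
`x ≠ z` and `x ≠ −z`. -/
theorem cocycle_condition_fails_without_kernel (K : Type*) [Field K] [CharZero K]
    (A : Type*) [Ring A] [Algebra K A]
    (D : Fin 3 → (A →ₗ[K] A)) (ξ : Fin 2 → A)
    (hcomm : ∀ k l, (D k) ∘ₗ (D l) + (D l) ∘ₗ (D k) = 0)
    (hLeib : ∀ k u (a : A), D k (ξ u * a) = D k (ξ u) * a + ξ u * D k a)
    (hDη : ∀ k l u, D k (D l (ξ u)) = 0)
    (hanti : ∀ k l u v, D k (ξ u) * D l (ξ v) = -(D l (ξ v) * D k (ξ u)))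
    (hcommξ : ∀ (u : Fin 2) (a : A), ξ u * a = a * ξ u)
    (hindep : LinearIndependent K
      (fun p : Fin 3 × Fin 2 × Fin 2 => ξ p.2.1 * D p.1 (ξ p.2.2)))
    (hindepηη : ∀ k l : Fin 3, k ≠ l → LinearIndependent K
      (fun p : Fin 2 × Fin 2 => D k (ξ p.1) * D l (ξ p.2)))
    (j j1 j2 : Fin 3) (hjj1 : j ≠ j1) (hjj2 : j ≠ j2) (hj12 : j1 ≠ j2)
    (hne : D j (ξ 0) * D j (ξ 1) ≠ 0) :
    ∃ f : A, f = ξ 0 * D j (ξ 1) ∧ D j f ≠ 0 ∧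
      (∃ x ∈ Submodule.span K {a : A | ∃ u v, a = ξ u * D j2 (ξ v)},
       ∃ u ∈ Submodule.span K {a : A | ∃ u' v, a = ξ u' * D j1 (ξ v)},
       ∃ z ∈ Submodule.span K {a : A | ∃ u' v, a = ξ u' * D j2 (ξ v)},
        D j x = D j2 f ∧ D j u = D j1 f ∧ D j1 z = D j2 u) ∧
      (∀ x ∈ Submodule.span K {a : A | ∃ u v, a = ξ u * D j2 (ξ v)},
       ∀ u ∈ Submodule.span K {a : A | ∃ u' v, a = ξ u' * D j1 (ξ v)},
       ∀ z ∈ Submodule.span K {a : A | ∃ u' v, a = ξ u' * D j2 (ξ v)},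
        D j x = D j2 f → D j u = D j1 f → D j1 z = D j2 u →
          x ≠ z ∧ x ≠ -z) := by
  classical
  have hspan : ∀ (k : Fin 3),
      {a : A | ∃ u v, a = ξ u * D k (ξ v)} =
      Set.range (fun p : Fin 2 × Fin 2 => ξ p.1 * D k (ξ p.2)) := by
    intro k
    ext a
    constructor
    · rintro ⟨u, v, rfl⟩; exact ⟨(u, v), rfl⟩
    · rintro ⟨⟨u, v⟩, rfl⟩; exact ⟨u, v, rfl⟩
  -- key: the inverse of D_l on the span is unique
  have key : ∀ (l k : Fin 3), l ≠ k →
      ∀ x ∈ Submodule.span K {a : A | ∃ u v, a = ξ u * D k (ξ v)},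
      ∀ (a b : Fin 2) (e : K),
        D l x = e • (D l (ξ a) * D k (ξ b)) → x = e • (ξ a * D k (ξ b)) := by
    intro l k hlk x hx a b e hDx
    rw [hspan k] at hx
    obtain ⟨c, hc⟩ := (Submodule.mem_span_range_iff_exists_fun K).mp hx
    have hDsum : D l x = ∑ p : Fin 2 × Fin 2, c p • (D l (ξ p.1) * D k (ξ p.2)) := by
      rw [← hc, map_sum]
      refine Finset.sum_congr rfl fun p _ => ?_
      rw [map_smul, hLeib, hDη, mul_zero, add_zero]
    have hite : ∀ (w : Fin 2 × Fin 2 → A),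
        ∑ p : Fin 2 × Fin 2, (if p = (a, b) then e else 0) • w p = e • w (a, b) := by
      intro w
      simp only [ite_smul, zero_smul]
      rw [Finset.sum_ite_eq' Finset.univ (a, b) (fun p => e • w p)]
      simp
    have hzero : ∑ p : Fin 2 × Fin 2,
        (c p - if p = (a, b) then e else 0) • (D l (ξ p.1) * D k (ξ p.2)) = 0 := by
      simp only [sub_smul]
      rw [Finset.sum_sub_distrib, ← hDsum, hDx,
        hite (fun p => D l (ξ p.1) * D k (ξ p.2)), sub_self]
    have hcval := Fintype.linearIndependent_iff.mp (hindepηη l k hlk) _ hzero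
    have hcval' : ∀ p : Fin 2 × Fin 2, c p = if p = (a, b) then e else 0 :=
      fun p => sub_eq_zero.mp (hcval p)
    calc x = ∑ p : Fin 2 × Fin 2, (if p = (a, b) then e else 0) •
            (ξ p.1 * D k (ξ p.2)) := by
          rw [← hc]; exact Finset.sum_congr rfl fun p _ => by rw [hcval' p]
      _ = e • (ξ a * D k (ξ b)) := hite _
  refine ⟨ξ 0 * D j (ξ 1), rfl, ?_, ?_, ?_⟩
  · -- D j f ≠ 0
    rw [hLeib, hDη, mul_zero, add_zero]
    exact hne
  · -- existence
    refine ⟨-(ξ 1 * D j2 (ξ 0)),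
      neg_mem (Submodule.subset_span ⟨1, 0, rfl⟩),
      -(ξ 1 * D j1 (ξ 0)),
      neg_mem (Submodule.subset_span ⟨1, 0, rfl⟩),
      ξ 0 * D j2 (ξ 1),
      Submodule.subset_span ⟨0, 1, rfl⟩, ?_, ?_, ?_⟩
    · rw [map_neg, hLeib, hDη, mul_zero, add_zero,
        hLeib, hDη, mul_zero, add_zero, hanti j2 j 0 1]
    · rw [map_neg, hLeib, hDη, mul_zero, add_zero,
        hLeib, hDη, mul_zero, add_zero, hanti j1 j 0 1]
    · rw [map_neg, hLeib, hDη, mul_zero, add_zero,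
        hLeib, hDη, mul_zero, add_zero, hanti j1 j2 0 1]
  · -- uniqueness / failure of cocycle identity
    intro x hx u hu z hz hxf huf hzu
    have hx' : x = (-1 : K) • (ξ 1 * D j2 (ξ 0)) := by
      refine key j j2 hjj2 x hx 1 0 (-1) ?_
      rw [hxf, hLeib, hDη, mul_zero, add_zero, hanti j2 j 0 1, neg_smul, one_smul]
    have hu' : u = (-1 : K) • (ξ 1 * D j1 (ξ 0)) := by
      refine key j j1 hjj1 u hu 1 0 (-1) ?_
      rw [huf, hLeib, hDη, mul_zero, add_zero, hanti j1 j 0 1, neg_smul, one_smul]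
    have hz' : z = (1 : K) • (ξ 0 * D j2 (ξ 1)) := by
      refine key j1 j2 hj12 z hz 0 1 1 ?_
      rw [hzu, hu', map_smul, hLeib, hDη, mul_zero, add_zero, neg_smul, one_smul,
        one_smul, hanti j1 j2 0 1]
    rw [hx', hz', neg_smul, one_smul, one_smul]
    -- now use linear independence of the products ξ_u η_v^{(k)}
    set v : Fin 3 × Fin 2 × Fin 2 → A := fun p => ξ p.2.1 * D p.1 (ξ p.2.2) with hv
    have hne10 : ((j2, 1, 0) : Fin 3 × Fin 2 × Fin 2) ≠ (j2, 0, 1) := by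
      simp
    have pairind : ∀ (ε : K), (-1 : K) • v (j2, 1, 0) + ε • v (j2, 0, 1) = 0 → False := by
      intro ε hsum
      let e : Fin 2 → Fin 3 × Fin 2 × Fin 2 := ![(j2, 1, 0), (j2, 0, 1)]
      have einj : Function.Injective e := by
        intro a b h
        fin_cases a <;> fin_cases b <;>
          first
          | rfl
          | (exfalso; simp [e, Prod.ext_iff] at h)
      have hpair := hindep.comp e einj
      have := Fintype.linearIndependent_iff.mp hpair ![(-1 : K), ε] ?_ 0
      · simp at this
      · rw [Fin.sum_univ_two]
        simpa [e, Function.comp] using hsum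
    constructor
    · intro h
      refine pairind (-1) ?_
      have : v (j2, 1, 0) = -(v (j2, 0, 1)) := by
        simpa [hv] using congrArg Neg.neg h
      rw [this]; simp
    · intro h
      refine pairind 1 ?_
      have : v (j2, 1, 0) = v (j2, 0, 1) := by
        simpa [hv] using congrArg Neg.neg h
      rw [this]; simp
end
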